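/- Given a continuous function κ : ℝ → ℝ, define φ(s) = ∫_{s₀}^s κ(u) du and γ(s) = (∫_{s₀}^s cos(φ(u)) du, ∫_{s₀}^s sin(φ(u)) du, 0). Then γ is a unit-speed planar curve, i.e., ‖γ'(s)‖ = 1 for all s, and γ'(s) = (cos φ(s), sin φ(s), 0). -/

import Mathlib

/-! By the fundamental theorem of calculus, φ is continuous and each coordinate of γ differentiates
to its integrand, so γ' = (cos φ, sin φ, 0), a unit vector. -/

open Matrix intervalIntegral

section

variable {𝕜 F : Type*} [NontriviallyNormedField 𝕜] [NormedAddCommGroup F] [NormedSpace 𝕜 F]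
  {x : 𝕜}

theorem HasDerivAt.vecCons {n : ℕ} {f : 𝕜 → F} {fs : 𝕜 → Fin n → F} {f' : F} {fs' : Fin n → F}
    (h : HasDerivAt f f' x) (hs : HasDerivAt fs fs' x) :
    HasDerivAt (fun t => vecCons (f t) (fs t)) (vecCons f' fs') x := by
  refine hasDerivAt_pi.2 fun i => Fin.cases ?_ (fun i => ?_) i
  · simpa using h
  · simpa using hasDerivAt_pi.1 hs i

theorem PiLp.hasDerivAt_of_hasDerivAt_ofLp {ι : Type*} [Fintype ι] (p : ENNReal) [Fact (1 ≤ p)]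
    {f : 𝕜 → PiLp p (fun _ : ι => F)} {f' : ι → F}
    (h : HasDerivAt (fun t => (f t).ofLp) f' x) : HasDerivAt f (WithLp.toLp p f') x := by
  simpa [Function.comp_def] using
    (PiLp.hasFDerivAt_toLp (𝕜 := 𝕜) p (f x).ofLp).comp_hasDerivAt x h

end

theorem norm_toLp_cos_sin_zero (θ : ℝ) :
    ‖(WithLp.toLp 2 ![Real.cos θ, Real.sin θ, 0] : EuclideanSpace ℝ (Fin 3))‖ = 1 := by
  simp [EuclideanSpace.norm_eq, Fin.sum_univ_three, Real.cos_sq_add_sin_sq]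

/-- Given continuous κ, with φ(s) = ∫_{s₀}^s κ and
γ(s) = (∫_{s₀}^s cos φ, ∫_{s₀}^s sin φ, 0), the curve γ is a unit-speed planar
curve with γ'(s) = (cos φ(s), sin φ(s), 0). -/
theorem natural_equation_planar_curve
    (κ : ℝ → ℝ) (hκ : Continuous κ) (s₀ : ℝ)
    (φ : ℝ → ℝ) (hφ : ∀ s, φ s = ∫ u in s₀..s, κ u)
    (γ : ℝ → EuclideanSpace ℝ (Fin 3))
    (hγ : ∀ s, γ s =
      ![∫ u in s₀..s, Real.cos (φ u), ∫ u in s₀..s, Real.sin (φ u), 0]) :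
    ∀ s : ℝ,
      deriv γ s = ![Real.cos (φ s), Real.sin (φ s), 0] ∧ ‖deriv γ s‖ = 1 := by
  intro s
  have hφ_cont : Continuous φ := by
    rw [funext hφ]
    exact continuous_primitive hκ.intervalIntegrable s₀
  have hγ_deriv : HasDerivAt γ (WithLp.toLp 2 ![Real.cos (φ s), Real.sin (φ s), 0]) s := by
    -- `hγ` elaborates as `(γ s).ofLp = ![…]`
    refine PiLp.hasDerivAt_of_hasDerivAt_ofLp 2 ?_
    rw [funext hγ]
    exact ((Real.continuous_cos.comp hφ_cont).integral_hasStrictDerivAt s₀ s).hasDerivAt.vecCons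
      (((Real.continuous_sin.comp hφ_cont).integral_hasStrictDerivAt s₀ s).hasDerivAt.vecCons
        ((hasDerivAt_const s 0).vecCons (hasDerivAt_pi.2 fun i => i.elim0)))
  rw [hγ_deriv.deriv]
  exact ⟨rfl, norm_toLp_cos_sin_zero (φ s)⟩
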